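/- Let Γ be an essential tree realization of a code C extending tree decomposition (T, ω), with full behavior 𝔅. If b ∈ 𝔅 and e ∈ E(T) satisfy b|_e = 0, then the symbol part b|_I lies in C_{J(e)} ⊕ C_{J̄(e)}, where (J(e), J̄(e)) is the partition of I induced by removing edge e from T. -/
import Mathlib


open Module

variable {F : Type*} [Field F] {I V : Type*} [Fintype I] [Fintype V]

section TreeModel

variable (F) (G : SimpleGraph V) (ω : I → V)
  (S : G.edgeSet → Type*) [∀ e, AddCommGroup (S e)] [∀ e, Module F (S e)]

/-- The local configuration at a vertex `v` of a global configuration: the symbol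
variables indexed by `ω⁻¹(v)` together with the state variables on edges incident
with `v`. -/
noncomputable def localizeL (v : V) :
    ((I → F) × ((e : G.edgeSet) → S e)) →ₗ[F]
      ((↥(ω ⁻¹' {v}) → F) × ((e : {e : G.edgeSet // v ∈ (e : Sym2 V)}) → S e.val)) :=
  LinearMap.prod
    ((LinearMap.funLeft F F Subtype.val).comp (LinearMap.fst F _ _))
    ((LinearMap.pi (fun e => LinearMap.proj e.val)).comp (LinearMap.snd F _ _))

/-- The full behavior of a tree model: all global configurations whose local
configuration at every vertex `v` satisfies the local constraint `Cv v`. -/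
noncomputable def fullBehavior
    (Cv : ∀ v : V, Submodule F
      ((↥(ω ⁻¹' {v}) → F) × ((e : {e : G.edgeSet // v ∈ (e : Sym2 V)}) → S e.val))) :
    Submodule F ((I → F) × ((e : G.edgeSet) → S e)) :=
  ⨅ v : V, (Cv v).comap (localizeL F G ω S v)

/-- Projection of a global configuration onto the state variable at edge `e`. -/
noncomputable def projEdge (e : G.edgeSet) :
    ((I → F) × ((e : G.edgeSet) → S e)) →ₗ[F] S e :=
  (LinearMap.proj e).comp (LinearMap.snd F _ _)

end TreeModel

/-- The submodule of vectors in `F^I` supported inside `J` (vanishing outside `J`). -/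
def suppSub (F : Type*) [Field F] {I : Type*} (J : Set I) : Submodule F (I → F) where
  carrier := {x | ∀ i ∉ J, x i = 0}
  add_mem' := by
    intro a b ha hb i hi
    show a i + b i = 0
    rw [ha i hi, hb i hi, add_zero]
  zero_mem' := fun i _ => rfl
  smul_mem' := by
    intro c a ha i hi
    show c • a i = 0
    rw [ha i hi, smul_zero]

lemma reach_of_mem_edge' {G' : SimpleGraph V} {s : Sym2 V} (hs : s ∈ G'.edgeSet)
    {a b : V} (ha : a ∈ s) (hb : b ∈ s) : G'.Reachable a b := by
  induction s using Sym2.ind with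
  | _ c d =>
    rw [Sym2.mem_iff] at ha hb
    have hadj : G'.Adj c d := hs
    rcases ha with rfl | rfl <;> rcases hb with rfl | rfl
    · rfl
    · exact hadj.reachable
    · exact hadj.symm.reachable
    · rfl

lemma side_of_walk' {G : SimpleGraph V} {u w : V} :
    ∀ {z y : V}, G.Walk z y →
      ((G.deleteEdges {s(u, w)}).Reachable y u ∨ (G.deleteEdges {s(u, w)}).Reachable y w) →
      ((G.deleteEdges {s(u, w)}).Reachable z u ∨ (G.deleteEdges {s(u, w)}).Reachable z w) := by
  intro z y W
  induction W with
  | nil => exact id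
  | @cons a b c h W ih =>
    intro hy
    have hb := ih hy
    by_cases he : s(a, b) = s(u, w)
    · rw [Sym2.eq_iff] at he
      rcases he with ⟨h1, h2⟩ | ⟨h1, h2⟩
      · subst h1; exact Or.inl (SimpleGraph.Reachable.refl _)
      · subst h1; exact Or.inr (SimpleGraph.Reachable.refl _)
    · have hadj : (G.deleteEdges {s(u, w)}).Adj a b := by
        rw [SimpleGraph.deleteEdges_adj]
        exact ⟨h, by simpa using he⟩
      rcases hb with h' | h'
      · exact Or.inl (hadj.reachable.trans h')
      · exact Or.inr (hadj.reachable.trans h')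


/-- in an essential tree realization of `C`, if a valid global
configuration `p` has zero state at an edge `e = {u,w}`, then its symbol part lies in
`C_{J(e)} ⊕ C_{J̄(e)}` (viewed inside `F^I` via extension by zero), where `J(e)` and
`J̄(e)` are the index sets mapped into the components of `T − e` containing `u` and `w`
respectively. -/
theorem zero_state_implies_direct_sum (G : SimpleGraph V) (hT : G.IsTree) (ω : I → V)
    (S : G.edgeSet → Type*) [∀ e, AddCommGroup (S e)] [∀ e, Module F (S e)]
    (Cv : ∀ v : V, Submodule F
      ((↥(ω ⁻¹' {v}) → F) × ((e : {e : G.edgeSet // v ∈ (e : Sym2 V)}) → S e.val)))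
    (C : Submodule F (I → F))
    (hreal : (fullBehavior F G ω S Cv).map
      (LinearMap.fst F (I → F) ((e : G.edgeSet) → S e)) = C)
    (hEss : ∀ e : G.edgeSet,
      (fullBehavior F G ω S Cv).map (projEdge F G S e) = ⊤)
    (u w : V) (huw : G.Adj u w)
    (p : (I → F) × ((e : G.edgeSet) → S e)) (hp : p ∈ fullBehavior F G ω S Cv)
    (h0 : p.2 ⟨s(u, w), G.mem_edgeSet.mpr huw⟩ = 0) :
    p.1 ∈
      (C ⊓ suppSub F (ω ⁻¹' {z | (G.deleteEdges {s(u, w)}).Reachable z u})) ⊔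
        (C ⊓ suppSub F (ω ⁻¹' {z | (G.deleteEdges {s(u, w)}).Reachable z w})) := by
  classical
  set G' := G.deleteEdges {s(u, w)} with hG'
  set e₀ : G.edgeSet := ⟨s(u, w), G.mem_edgeSet.mpr huw⟩ with he₀
  set A : V → Prop := fun v => G'.Reachable v u with hA
  -- every vertex is on one of the two sides
  have hside : ∀ v : V, A v ∨ G'.Reachable v w := by
    intro v
    obtain ⟨W⟩ := hT.isConnected.preconnected v u
    exact side_of_walk' W (Or.inl (SimpleGraph.Reachable.refl _))
  -- edges (other than e₀) have all endpoints on the same side as any of their vertices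
  have hedge : ∀ (e : G.edgeSet), e ≠ e₀ → ∀ a b : V,
      a ∈ (e : Sym2 V) → b ∈ (e : Sym2 V) → G'.Reachable a b := by
    intro e hne a b ha hb
    have : (e : Sym2 V) ∈ G'.edgeSet := by
      rw [hG', SimpleGraph.edgeSet_deleteEdges]
      refine ⟨e.prop, ?_⟩
      simp only [Set.mem_singleton_iff]
      intro hc
      exact hne (Subtype.ext hc)
    exact reach_of_mem_edge' this ha hb
  -- the one-sided configuration q
  set q : (I → F) × ((e : G.edgeSet) → S e) :=
    (fun i => if A (ω i) then p.1 i else 0,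
     fun e => if e ≠ e₀ ∧ ∃ a ∈ (e : Sym2 V), A a then p.2 e else 0) with hq
  -- q is in the full behavior
  have hqmem : q ∈ fullBehavior F G ω S Cv := by
    rw [fullBehavior, Submodule.mem_iInf]
    intro v
    rw [Submodule.mem_comap]
    by_cases hv : A v
    · have : localizeL F G ω S v q = localizeL F G ω S v p := by
        refine Prod.ext (funext fun i => ?_) (funext fun e => ?_)
        · have hiv : ω i.val = v := i.prop
          show (if A (ω i.val) then p.1 i.val else 0) = p.1 i.val
          rw [hiv, if_pos hv]
        · show (if e.val ≠ e₀ ∧ ∃ a ∈ (e.val : Sym2 V), A a then p.2 e.val else 0)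
            = p.2 e.val
          by_cases hee : e.val = e₀
          · rw [if_neg (by simp [hee]), hee, h0]
          · rw [if_pos ⟨hee, v, e.prop, hv⟩]
      rw [this]
      exact (Submodule.mem_iInf _).mp hp v
    · have : localizeL F G ω S v q = 0 := by
        refine Prod.ext (funext fun i => ?_) (funext fun e => ?_)
        · have hiv : ω i.val = v := i.prop
          show (if A (ω i.val) then p.1 i.val else 0) = 0
          rw [hiv, if_neg hv]
        · show (if e.val ≠ e₀ ∧ ∃ a ∈ (e.val : Sym2 V), A a then p.2 e.val else 0) = 0
          rw [if_neg]
          rintro ⟨hne, a, ha, hau⟩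
          exact hv ((hedge e.val hne v a e.prop ha).trans hau)
      rw [this]
      exact (Cv v).zero_mem
  have hrmem : p - q ∈ fullBehavior F G ω S Cv := sub_mem hp hqmem
  rw [Submodule.mem_sup]
  refine ⟨q.1, ⟨?_, ?_⟩, (p - q).1, ⟨?_, ?_⟩, by simp⟩
  · rw [← hreal]; exact ⟨q, hqmem, rfl⟩
  · intro i hi
    exact if_neg hi
  · rw [← hreal]; exact ⟨p - q, hrmem, rfl⟩
  · intro i hi
    have hAi : A (ω i) := (hside (ω i)).resolve_right hi
    show p.1 i - (if A (ω i) then p.1 i else 0) = 0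
    rw [if_pos hAi, sub_self]
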